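/- arXiv:1509.07778 — 2 statements merged into one kernel-verified Lean document; each statement's English description precedes it below -/
import Mathlib

section
/- Let Γ be a C¹ closed curve in ℝ² separating Ω⁺ from Ω⁻, with outward unit normal n and unit tangent τ. Suppose u is a vector field, continuous across Γ, with u^± ∈ C¹ up to Γ from each side, satisfying div u⁺ = div u⁻ on Γ and jump of the (scalar) curl [curl u] = curl u⁺ − curl u⁻ = 1 on Γ. Then the jump of the normal derivative of u across Γ satisfies [∇_n u] = −τ on Γ. -/
open MeasureTheory Set

noncomputable section

abbrev Euc (n : ℕ) : Type := EuclideanSpace ℝ (Fin n)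

/-- Partial derivative (vector valued). -/
def pdv {n m : ℕ} (j : Fin n) (f : Euc n → Euc m) (x : Euc n) : Euc m :=
  fderiv ℝ f x (EuclideanSpace.single j 1)

/-- Divergence. -/
def divE {n : ℕ} (f : Euc n → Euc n) (x : Euc n) : ℝ := ∑ j, pdv j f x j

/-- Scalar curl in 2-D: `curl u = ∂₁u² − ∂₂u¹`. -/
def curl2 (f : Euc 2 → Euc 2) (x : Euc 2) : ℝ := pdv 0 f x 1 - pdv 1 f x 0

lemma euc2_decomp (v : Euc 2) :
    v = v 0 • EuclideanSpace.single (0 : Fin 2) (1:ℝ) + v 1 • EuclideanSpace.single (1 : Fin 2) (1:ℝ) := by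
  ext i
  fin_cases i <;> simp [EuclideanSpace.single_apply]

/-- Across a `C¹` interface curve `Γ` in `ℝ²` (with unit tangent `τ` and unit
normal `n = τ^⊥`), if the vector field `u` is continuous across `Γ`, is `C¹` from each side,
has continuous divergence and a jump of the scalar curl equal to `1`, then the jump of the
normal derivative satisfies `[∇_n u] = −τ`. -/
theorem jump_normal_derivative_2d
    (Γ : Set (Euc 2)) (up um : Euc 2 → Euc 2) (x τ nv : Euc 2)
    (hx : x ∈ Γ) (hτ : ‖τ‖ = 1)
    (hn0 : nv 0 = -(τ 1)) (hn1 : nv 1 = τ 0)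
    (hup : DifferentiableAt ℝ up x) (hum : DifferentiableAt ℝ um x)
    (hcont : ∀ y ∈ Γ, up y = um y)
    (γ : ℝ → Euc 2) (hγ0 : γ 0 = x) (hγτ : HasDerivAt γ τ 0)
    (hγΓ : ∀ᶠ s in nhds (0 : ℝ), γ s ∈ Γ)
    (hdiv : divE up x = divE um x)
    (hcurl : curl2 up x - curl2 um x = 1) :
    fderiv ℝ up x nv - fderiv ℝ um x nv = -τ := by
  have h1 : HasDerivAt (up ∘ γ) (fderiv ℝ up x τ) 0 :=
    HasFDerivAt.comp_hasDerivAt 0 (hγ0 ▸ hup.hasFDerivAt) hγτ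
  have h2 : HasDerivAt (um ∘ γ) (fderiv ℝ um x τ) 0 :=
    HasFDerivAt.comp_hasDerivAt 0 (hγ0 ▸ hum.hasFDerivAt) hγτ
  have heq : up ∘ γ =ᶠ[nhds (0:ℝ)] um ∘ γ := hγΓ.mono fun s hs => hcont _ hs
  have hBτ : fderiv ℝ up x τ = fderiv ℝ um x τ :=
    h1.unique (h2.congr_of_eventuallyEq heq)
  set D := fderiv ℝ up x with hD
  set E := fderiv ℝ um x with hE
  set e0 : Euc 2 := EuclideanSpace.single (0 : Fin 2) (1:ℝ)
  set e1 : Euc 2 := EuclideanSpace.single (1 : Fin 2) (1:ℝ)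
  have hτd : τ = τ 0 • e0 + τ 1 • e1 := euc2_decomp τ
  have hnd : nv = (-(τ 1)) • e0 + (τ 0) • e1 := by
    rw [← hn0, ← hn1]; exact euc2_decomp nv
  have hrow0 : τ 0 * D e0 0 + τ 1 * D e1 0 = τ 0 * E e0 0 + τ 1 * E e1 0 := by
    rw [hτd] at hBτ
    have h := congrFun (congrArg (fun (w : Euc 2) => (w : Fin 2 → ℝ)) hBτ) 0
    simpa [map_add, _root_.map_smul, mul_comm] using h
  have hrow1 : τ 0 * D e0 1 + τ 1 * D e1 1 = τ 0 * E e0 1 + τ 1 * E e1 1 := by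
    rw [hτd] at hBτ
    have h := congrFun (congrArg (fun (w : Euc 2) => (w : Fin 2 → ℝ)) hBτ) 1
    simpa [map_add, _root_.map_smul, mul_comm] using h
  have hdiv' : D e0 0 + D e1 1 = E e0 0 + E e1 1 := by
    simpa [divE, pdv, Fin.sum_univ_two, ← hD, ← hE, e0, e1] using hdiv
  have hcurl' : (D e0 1 - D e1 0) - (E e0 1 - E e1 0) = 1 := by
    simpa [curl2, pdv, ← hD, ← hE, e0, e1] using hcurl
  rw [hnd]
  ext i
  fin_cases i
  · have : D ((-(τ 1)) • e0 + (τ 0) • e1) 0 - E ((-(τ 1)) • e0 + (τ 0) • e1) 0 = -(τ 0) := by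
      simp only [map_add, _root_.map_smul]
      simp only [PiLp.add_apply, PiLp.smul_apply, smul_eq_mul]
      linear_combination hrow1 - τ 1 * hdiv' - τ 0 * hcurl'
    simpa using this
  · have : D ((-(τ 1)) • e0 + (τ 0) • e1) 1 - E ((-(τ 1)) • e0 + (τ 0) • e1) 1 = -(τ 1) := by
      simp only [map_add, _root_.map_smul]
      simp only [PiLp.add_apply, PiLp.smul_apply, smul_eq_mul]
      linear_combination τ 0 * hdiv' - hrow0 - τ 1 * hcurl'
    simpa using this

end
end

section
/- Let Γ(t) be a C¹ closed surface in ℝ³ with outward unit normal n and orthonormal tangent frame (τ₁, τ₂) such that (τ₁, τ₂, n) is a direct orthonormal frame, separating Ω⁺(t) from Ω⁻(t). Suppose u is continuous across Γ(t), with u^± ∈ C¹ up to Γ(t) from each side, div u⁺ = div u⁻ on Γ(t), curl u⁻ = 0 on Γ(t), and curl u⁺ · n = 0 on Γ(t). Then the jump of the normal derivative of u across Γ(t) satisfies [∇_n u] = (curl u⁺·τ₂) τ₁ − (curl u⁺·τ₁) τ₂ on Γ(t). -/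
/-! Since `u⁺ = u⁻` on `Γ`, the tangential derivatives of `u⁺` and `u⁻` agree, so the jump of the
differential is the rank-one map `v ↦ ⟪n, v⟫ w` with `w = [∇_n u]`. The jump of the divergence is
its trace `⟪n, w⟫`, hence `w` is tangent; the jump of the curl is `n × w`, hence `curl u⁺ = n × w`.
A tangent vector `w` is recovered from `n × w` by a quarter turn back in the tangent plane. -/

open MeasureTheory Set
open scoped RealInnerProductSpace

noncomputable section

def mk3 (a b c : ℝ) : Euc 3 := (WithLp.equiv 2 (Fin 3 → ℝ)).symm ![a, b, c]

/-- Curl in 3-D. -/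
def curl3 (f : Euc 3 → Euc 3) (x : Euc 3) : Euc 3 :=
  mk3 (pdv 1 f x 2 - pdv 2 f x 1) (pdv 2 f x 0 - pdv 0 f x 2) (pdv 0 f x 1 - pdv 1 f x 0)

/-- Cross product in 3-D. -/
def cross3 (a b : Euc 3) : Euc 3 :=
  mk3 (a 1 * b 2 - a 2 * b 1) (a 2 * b 0 - a 0 * b 2) (a 0 * b 1 - a 1 * b 0)

open Module

theorem Orthonormal.sum_inner_smul_eq {𝕜 ι E : Type*} [RCLike 𝕜] [Fintype ι]
    [NormedAddCommGroup E] [InnerProductSpace 𝕜 E] [FiniteDimensional 𝕜 E] {v : ι → E}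
    (hv : Orthonormal 𝕜 v) (hcard : Fintype.card ι = finrank 𝕜 E) (x : E) :
    ∑ i, inner 𝕜 (v i) x • v i = x := by
  have hspan := hv.linearIndependent.span_eq_top_of_card_eq_finrank' hcard
  simpa using (OrthonormalBasis.mk hv hspan.ge).sum_repr' x

theorem fderiv_apply_eq_of_comp_eventuallyEq {E F : Type*} [NormedAddCommGroup E]
    [NormedSpace ℝ E] [NormedAddCommGroup F] [NormedSpace ℝ F] {f g : E → F} {x τ : E}
    {γ : ℝ → E} {t : ℝ} (hf : DifferentiableAt ℝ f x) (hg : DifferentiableAt ℝ g x)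
    (hγx : γ t = x) (hγ : HasDerivAt γ τ t) (hfg : f ∘ γ =ᶠ[nhds t] g ∘ γ) :
    fderiv ℝ f x τ = fderiv ℝ g x τ := by
  subst hγx
  exact ((hf.hasFDerivAt.comp_hasDerivAt t hγ).congr_of_eventuallyEq hfg.symm).unique
    (hg.hasFDerivAt.comp_hasDerivAt t hγ)

theorem cross3_eq_crossProduct (a b : Euc 3) :
    cross3 a b = WithLp.toLp 2 (crossProduct a.ofLp b.ofLp) := by
  ext i; fin_cases i <;> simp [cross3, mk3, cross_apply]

theorem real_inner_eq_dotProduct {n : ℕ} (a b : Euc n) : ⟪a, b⟫ = a.ofLp ⬝ᵥ b.ofLp := by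
  simp [EuclideanSpace.inner_eq_star_dotProduct, dotProduct_comm]

theorem inner_cross3_left (a b c : Euc 3) : ⟪cross3 a b, c⟫ = ⟪b, cross3 c a⟫ := by
  simp only [real_inner_eq_dotProduct, cross3_eq_crossProduct, dotProduct_comm _ c.ofLp]
  rw [triple_product_permutation, triple_product_permutation]

theorem inner_cross3_self_left (a b : Euc 3) : ⟪cross3 a b, a⟫ = 0 := by
  rw [real_inner_eq_dotProduct, cross3_eq_crossProduct, dotProduct_comm]
  exact dot_self_cross _ _

theorem inner_cross3_self_right (a b : Euc 3) : ⟪cross3 a b, b⟫ = 0 := by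
  rw [real_inner_eq_dotProduct, cross3_eq_crossProduct, dotProduct_comm]
  exact dot_cross_self _ _

theorem cross3_anticomm (a b : Euc 3) : cross3 b a = -cross3 a b := by
  rw [cross3_eq_crossProduct, cross3_eq_crossProduct, ← cross_anticomm]; rfl

theorem orthonormal_of_cross3 {τ₁ τ₂ ν : Euc 3} (hτ₁ : ‖τ₁‖ = 1) (hτ₂ : ‖τ₂‖ = 1) (hν : ‖ν‖ = 1)
    (hcross₂ : cross3 τ₂ ν = τ₁) (hcross₃ : cross3 ν τ₁ = τ₂) : Orthonormal ℝ ![τ₁, τ₂, ν] := by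
  have h₁₂ : ⟪τ₁, τ₂⟫ = 0 := hcross₂ ▸ inner_cross3_self_left τ₂ ν
  have h₁ν : ⟪τ₁, ν⟫ = 0 := hcross₂ ▸ inner_cross3_self_right τ₂ ν
  have h₂ν : ⟪τ₂, ν⟫ = 0 := hcross₃ ▸ inner_cross3_self_left ν τ₁
  rw [orthonormal_iff_ite]
  intro i j
  fin_cases i <;> fin_cases j <;> simp [real_inner_comm, *]

section OrthonormalTriple

variable {E : Type*} [NormedAddCommGroup E] [InnerProductSpace ℝ E] [FiniteDimensional ℝ E]
  {τ₁ τ₂ ν : E}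

theorem Orthonormal.inner_smul_add_inner_smul_add_inner_smul (h : Orthonormal ℝ ![τ₁, τ₂, ν])
    (hE : finrank ℝ E = 3) (v : E) : ⟪τ₁, v⟫ • τ₁ + ⟪τ₂, v⟫ • τ₂ + ⟪ν, v⟫ • ν = v := by
  simpa [Fin.sum_univ_three, add_assoc] using h.sum_inner_smul_eq (by simp [hE]) v

theorem Orthonormal.map_eq_inner_smul_of_map_eq_zero {F : Type*} [AddCommGroup F] [Module ℝ F]
    (h : Orthonormal ℝ ![τ₁, τ₂, ν]) (hE : finrank ℝ E = 3) (L : E →ₗ[ℝ] F)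
    (hL₁ : L τ₁ = 0) (hL₂ : L τ₂ = 0) (v : E) : L v = ⟪ν, v⟫ • L ν := by
  conv_lhs => rw [← h.inner_smul_add_inner_smul_add_inner_smul hE v]
  simp [hL₁, hL₂]

end OrthonormalTriple

theorem eq_inner_cross3_smul_sub_inner_cross3_smul {τ₁ τ₂ ν w : Euc 3}
    (h : Orthonormal ℝ ![τ₁, τ₂, ν]) (hcross₂ : cross3 τ₂ ν = τ₁) (hcross₃ : cross3 ν τ₁ = τ₂)
    (hw : ⟪ν, w⟫ = 0) : w = ⟪cross3 ν w, τ₂⟫ • τ₁ - ⟪cross3 ν w, τ₁⟫ • τ₂ := by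
  have h₁ : ⟪cross3 ν w, τ₁⟫ = -⟪τ₂, w⟫ := by
    rw [inner_cross3_left, cross3_anticomm, hcross₃, inner_neg_right, real_inner_comm]
  have h₂ : ⟪cross3 ν w, τ₂⟫ = ⟪τ₁, w⟫ := by
    rw [inner_cross3_left, hcross₂, real_inner_comm]
  have hexp := h.inner_smul_add_inner_smul_add_inner_smul (by simp) w
  rw [hw, zero_smul, add_zero] at hexp
  rw [h₁, h₂, neg_smul, sub_neg_eq_add, hexp]

section Jump

variable {n : ℕ} {f g : Euc n → Euc n} {x a w : Euc n}

theorem pdv_sub_pdv_of_fderiv_sub (hfg : ∀ v, fderiv ℝ f x v - fderiv ℝ g x v = ⟪a, v⟫ • w)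
    (j : Fin n) : pdv j f x - pdv j g x = a j • w := by
  simpa [pdv, EuclideanSpace.inner_single_right] using hfg (EuclideanSpace.single j 1)

theorem divE_sub_divE_of_fderiv_sub (hfg : ∀ v, fderiv ℝ f x v - fderiv ℝ g x v = ⟪a, v⟫ • w) :
    divE f x - divE g x = ⟪a, w⟫ := by
  simp only [divE, ← Finset.sum_sub_distrib, ← PiLp.sub_apply, pdv_sub_pdv_of_fderiv_sub hfg,
    PiLp.smul_apply, smul_eq_mul, PiLp.inner_apply, RCLike.inner_apply, conj_trivial, mul_comm]

end Jump

theorem curl3_sub_curl3_of_fderiv_sub {f g : Euc 3 → Euc 3} {x a w : Euc 3}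
    (hfg : ∀ v, fderiv ℝ f x v - fderiv ℝ g x v = ⟪a, v⟫ • w) :
    curl3 f x - curl3 g x = cross3 a w := by
  have h (j i : Fin 3) : pdv j f x i - pdv j g x i = a j * w i := by
    simpa using congrArg (· i) (pdv_sub_pdv_of_fderiv_sub hfg j)
  ext i
  fin_cases i <;>
    simp only [curl3, cross3, mk3, Fin.isValue, WithLp.equiv_symm_apply, Fin.zero_eta, Fin.mk_one,
      Fin.reduceFinMk, PiLp.sub_apply, Matrix.cons_val_zero, Matrix.cons_val_one, Matrix.cons_val] <;>
    linarith [h 1 2, h 2 1, h 2 0, h 0 2, h 0 1, h 1 0]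

theorem jump_normal_derivative_3d_general
    (Γ : Set (Euc 3)) (up um : Euc 3 → Euc 3) (x τ₁ τ₂ nv : Euc 3)
    (hτ₁ : ‖τ₁‖ = 1) (hτ₂ : ‖τ₂‖ = 1) (hn : ‖nv‖ = 1)
    (hfr₂ : cross3 τ₂ nv = τ₁) (hfr₃ : cross3 nv τ₁ = τ₂)
    (hup : DifferentiableAt ℝ up x) (hum : DifferentiableAt ℝ um x)
    (hcont : ∀ y ∈ Γ, up y = um y)
    (γ₁ γ₂ : ℝ → Euc 3) (hγ₁0 : γ₁ 0 = x) (hγ₂0 : γ₂ 0 = x)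
    (hγ₁τ : HasDerivAt γ₁ τ₁ 0) (hγ₂τ : HasDerivAt γ₂ τ₂ 0)
    (hγ₁Γ : ∀ᶠ s in nhds (0 : ℝ), γ₁ s ∈ Γ) (hγ₂Γ : ∀ᶠ s in nhds (0 : ℝ), γ₂ s ∈ Γ)
    (hdiv : divE up x = divE um x)
    (hcurlm : curl3 um x = 0) :
    fderiv ℝ up x nv - fderiv ℝ um x nv
      = ⟪curl3 up x, τ₂⟫ • τ₁ - ⟪curl3 up x, τ₁⟫ • τ₂ := by
  set w := fderiv ℝ up x nv - fderiv ℝ um x nv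
  have hframe := orthonormal_of_cross3 hτ₁ hτ₂ hn hfr₂ hfr₃
  have htangent (γ : ℝ → Euc 3) (τ : Euc 3) (hγx : γ 0 = x) (hγ : HasDerivAt γ τ 0)
      (hγΓ : ∀ᶠ s in nhds 0, γ s ∈ Γ) : (fderiv ℝ up x - fderiv ℝ um x) τ = 0 :=
    sub_eq_zero.2 <| fderiv_apply_eq_of_comp_eventuallyEq hup hum hγx hγ <|
      hγΓ.mono fun s hs => hcont _ hs
  have hjump (v : Euc 3) : fderiv ℝ up x v - fderiv ℝ um x v = ⟪nv, v⟫ • w :=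
    hframe.map_eq_inner_smul_of_map_eq_zero (by simp) (fderiv ℝ up x - fderiv ℝ um x).toLinearMap
      (htangent γ₁ τ₁ hγ₁0 hγ₁τ hγ₁Γ) (htangent γ₂ τ₂ hγ₂0 hγ₂τ hγ₂Γ) v
  have hnormal : ⟪nv, w⟫ = 0 := by
    rw [← divE_sub_divE_of_fderiv_sub hjump, hdiv, sub_self]
  have hcurl : curl3 up x = cross3 nv w := by
    simpa [hcurlm] using curl3_sub_curl3_of_fderiv_sub hjump
  rw [hcurl]
  exact eq_inner_cross3_smul_sub_inner_cross3_smul hframe hfr₂ hfr₃ hnormal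

/-- Across a `C¹` interface surface in `ℝ³` with direct orthonormal frame
`(τ₁, τ₂, n)`, if `u` is continuous across the surface, `C¹` from each side, with continuous
divergence, `curl u⁻ = 0` and `curl u⁺ · n = 0`, then
`[∇_n u] = (curl u⁺·τ₂) τ₁ − (curl u⁺·τ₁) τ₂`. -/
theorem jump_normal_derivative_3d
    (Γ : Set (Euc 3)) (up um : Euc 3 → Euc 3) (x τ₁ τ₂ nv : Euc 3)
    (hx : x ∈ Γ)
    (hτ₁ : ‖τ₁‖ = 1) (hτ₂ : ‖τ₂‖ = 1) (hn : ‖nv‖ = 1)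
    (hfr₁ : cross3 τ₁ τ₂ = nv) (hfr₂ : cross3 τ₂ nv = τ₁) (hfr₃ : cross3 nv τ₁ = τ₂)
    (hup : DifferentiableAt ℝ up x) (hum : DifferentiableAt ℝ um x)
    (hcont : ∀ y ∈ Γ, up y = um y)
    (γ₁ γ₂ : ℝ → Euc 3) (hγ₁0 : γ₁ 0 = x) (hγ₂0 : γ₂ 0 = x)
    (hγ₁τ : HasDerivAt γ₁ τ₁ 0) (hγ₂τ : HasDerivAt γ₂ τ₂ 0)
    (hγ₁Γ : ∀ᶠ s in nhds (0 : ℝ), γ₁ s ∈ Γ) (hγ₂Γ : ∀ᶠ s in nhds (0 : ℝ), γ₂ s ∈ Γ)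
    (hdiv : divE up x = divE um x)
    (hcurlm : curl3 um x = 0)
    (hcurln : ⟪curl3 up x, nv⟫ = 0) :
    fderiv ℝ up x nv - fderiv ℝ um x nv
      = ⟪curl3 up x, τ₂⟫ • τ₁ - ⟪curl3 up x, τ₁⟫ • τ₂ :=
  jump_normal_derivative_3d_general Γ up um x τ₁ τ₂ nv hτ₁ hτ₂ hn hfr₂ hfr₃ hup hum hcont γ₁ γ₂ hγ₁0
    hγ₂0 hγ₁τ hγ₂τ hγ₁Γ hγ₂Γ hdiv hcurlm

end
end
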